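/- For a complex unit hypergraph with n ≥ 1 vertices and m ≥ 1 edges, the largest eigenvalue of the Kirchhoff Laplacian satisfies max{Δ, ∇} ≤ λ_max(K), where Δ is the maximum vertex degree and ∇ is the maximum edge size. -/

import Mathlib

open Matrix

/-- Degree of vertex `i`: the number of edges `k` with `ω i k ≠ 0`. -/
noncomputable def deg {n m : ℕ} (ω : Fin n → Fin m → ℂ) (i : Fin n) : ℕ :=
  Nat.card {k : Fin m // ω i k ≠ 0}

/-- Size of edge `k`: the number of vertices `i` with `ω i k ≠ 0`. -/
noncomputable def edgeSize {n m : ℕ} (ω : Fin n → Fin m → ℂ) (k : Fin m) : ℕ :=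
  Nat.card {i : Fin n // ω i k ≠ 0}

/-- Incidence matrix of a complex unit hypergraph. -/
noncomputable def incM {n m : ℕ} (ω : Fin n → Fin m → ℂ) : Matrix (Fin n) (Fin m) ℂ :=
  Matrix.of ω

/-- Largest eigenvalue of a Hermitian matrix. -/
noncomputable def lamMax {N : ℕ} (hN : 0 < N) {M : Matrix (Fin N) (Fin N) ℂ}
    (h : M.IsHermitian) : ℝ :=
  Finset.univ.sup' (Finset.univ_nonempty_iff.mpr ⟨⟨0, hN⟩⟩) h.eigenvalues

/-! Since `K = B Bᴴ` lies below `λ_max • 1` in the Loewner order, `‖Bᴴ x‖² ≤ λ_max ‖x‖²` for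
every `x`. For `x = eᵢ` the left side is the squared norm of row `i` of `B`, which for a unit
hypergraph is `deg i`. For `x` the `k`-th column `b` of `B`, the `k`-th entry of `Bᴴ b` is `‖b‖²`,
so `‖b‖⁴ ≤ λ_max ‖b‖²`, and `‖b‖² = |e_k|`. -/

lemma Complex.re_star_dotProduct_self {ι : Type*} [Fintype ι] (x : ι → ℂ) :
    (star x ⬝ᵥ x).re = ∑ i, ‖x i‖ ^ 2 := by
  simp [dotProduct, Complex.re_sum, Complex.conj_mul', ← Complex.ofReal_pow, Complex.ofReal_re]

section LamMax

variable {N : ℕ} (hN : 0 < N) {M : Matrix (Fin N) (Fin N) ℂ}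

open scoped MatrixOrder in
lemma le_algebraMap_lamMax (hM : M.IsHermitian) : M ≤ algebraMap ℝ _ (lamMax hN hM) := by
  refine le_algebraMap_of_spectrum_le (fun x hx => ?_) hM
  obtain ⟨i, rfl⟩ := hM.spectrum_real_eq_range_eigenvalues ▸ hx
  exact Finset.le_sup' _ (Finset.mem_univ i)

lemma re_star_dotProduct_mulVec_le_lamMax (hM : M.IsHermitian) (x : Fin N → ℂ) :
    (star x ⬝ᵥ (M *ᵥ x)).re ≤ lamMax hN hM * ∑ i, ‖x i‖ ^ 2 := by
  simpa [Algebra.algebraMap_eq_smul_one, sub_mulVec, dotProduct_sub, smul_mulVec, dotProduct_smul,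
    Complex.re_star_dotProduct_self] using
    (Matrix.le_iff.mp (le_algebraMap_lamMax hN hM)).re_dotProduct_nonneg x

end LamMax

section GramMatrix

variable {n : ℕ} (hn : 0 < n) {ι : Type*} [Fintype ι] (B : Matrix (Fin n) ι ℂ)

lemma lamMax_mul_conjTranspose_self_nonneg :
    0 ≤ lamMax hn (isHermitian_mul_conjTranspose_self B) :=
  (eigenvalues_self_mul_conjTranspose_nonneg B ⟨0, hn⟩).trans (Finset.le_sup' _ (Finset.mem_univ _))

lemma sum_norm_sq_conjTranspose_mulVec_le_lamMax (x : Fin n → ℂ) :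
    ∑ j, ‖(Bᴴ *ᵥ x) j‖ ^ 2 ≤ lamMax hn (isHermitian_mul_conjTranspose_self B) * ∑ i, ‖x i‖ ^ 2 := by
  rw [← Complex.re_star_dotProduct_self, star_mulVec, conjTranspose_conjTranspose,
    ← dotProduct_mulVec, mulVec_mulVec]
  exact re_star_dotProduct_mulVec_le_lamMax hn _ x

lemma sum_norm_sq_row_le_lamMax (i : Fin n) :
    ∑ j, ‖B i j‖ ^ 2 ≤ lamMax hn (isHermitian_mul_conjTranspose_self B) := by
  simpa [mulVec_single, Pi.single_apply, apply_ite] using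
    sum_norm_sq_conjTranspose_mulVec_le_lamMax hn B (Pi.single i 1)

lemma sum_norm_sq_col_le_lamMax (k : ι) :
    ∑ i, ‖B i k‖ ^ 2 ≤ lamMax hn (isHermitian_mul_conjTranspose_self B) := by
  set s := ∑ i, ‖B i k‖ ^ 2
  set b : Fin n → ℂ := fun i => B i k
  have hBb : (Bᴴ *ᵥ b) k = s := by
    simp [s, b, mulVec, dotProduct, Complex.conj_mul']
  have hs_sq : s ^ 2 ≤ lamMax hn (isHermitian_mul_conjTranspose_self B) * s :=
    calc s ^ 2 = ‖(Bᴴ *ᵥ b) k‖ ^ 2 := by rw [hBb, Complex.norm_real, Real.norm_eq_abs, sq_abs]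
      _ ≤ ∑ j, ‖(Bᴴ *ᵥ b) j‖ ^ 2 :=
        Finset.single_le_sum (f := fun j => ‖(Bᴴ *ᵥ b) j‖ ^ 2) (fun j _ => by positivity)
          (Finset.mem_univ k)
      _ ≤ _ := sum_norm_sq_conjTranspose_mulVec_le_lamMax hn B b
  rcases (show 0 ≤ s by positivity).eq_or_lt with hs | hs
  · exact hs ▸ lamMax_mul_conjTranspose_self_nonneg hn B
  · nlinarith

end GramMatrix

lemma sum_norm_sq_eq_card_ne_zero {ι : Type*} [Fintype ι] (f : ι → ℂ)
    (hf : ∀ j, f j = 0 ∨ ‖f j‖ = 1) : ∑ j, ‖f j‖ ^ 2 = Nat.card {j // f j ≠ 0} := by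
  classical
  rw [Nat.card_eq_fintype_card, Fintype.card_subtype, ← Finset.sum_boole]
  refine Finset.sum_congr rfl fun j _ => ?_
  rcases hf j with h | h
  · simp [h]
  · simp [h, ← norm_eq_zero (a := f j)]

lemma Nat.cast_finsetSup_le {ι R : Type*} [Semiring R] [LinearOrder R] [IsStrictOrderedRing R]
    (s : Finset ι) (f : ι → ℕ) {L : R} (hL : 0 ≤ L) (h : ∀ i ∈ s, (f i : R) ≤ L) :
    ((s.sup f : ℕ) : R) ≤ L :=
  Finset.sup_induction (p := fun a : ℕ => (a : R) ≤ L) (by simpa)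
    (fun a ha b hb => by simpa [Nat.cast_max] using And.intro ha hb) h

theorem stmt19_general (n m : ℕ) (hn : 0 < n) (ω : Fin n → Fin m → ℂ)
    (hω : ∀ i k, ω i k = 0 ∨ ‖ω i k‖ = 1) :
    ((max (Finset.univ.sup (deg ω)) (Finset.univ.sup (edgeSize ω)) : ℕ) : ℝ) ≤
      lamMax hn (Matrix.isHermitian_mul_conjTranspose_self (incM ω)) := by
  have hL := lamMax_mul_conjTranspose_self_nonneg hn (incM ω)
  rw [Nat.cast_max]
  refine max_le (Nat.cast_finsetSup_le _ _ hL fun i _ => ?_)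
    (Nat.cast_finsetSup_le _ _ hL fun k _ => ?_)
  · rw [deg, ← sum_norm_sq_eq_card_ne_zero _ (hω i)]
    exact sum_norm_sq_row_le_lamMax hn (incM ω) i
  · rw [edgeSize, ← sum_norm_sq_eq_card_ne_zero (fun i => ω i k) (hω · k)]
    exact sum_norm_sq_col_le_lamMax hn (incM ω) k

/-- For a complex unit hypergraph with `n ≥ 1` vertices and `m ≥ 1` edges,
`max{Δ, ∇} ≤ λ_max(K)`. -/
theorem stmt19 (n m : ℕ) (hn : 0 < n) (hm : 0 < m) (ω : Fin n → Fin m → ℂ)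
    (hω : ∀ i k, ω i k = 0 ∨ ‖ω i k‖ = 1) :
    ((max (Finset.univ.sup (deg ω)) (Finset.univ.sup (edgeSize ω)) : ℕ) : ℝ) ≤
      lamMax hn (Matrix.isHermitian_mul_conjTranspose_self (incM ω)) :=
  stmt19_general n m hn ω hω
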